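/- Let 𝒯 = (T,H,V,t₀) be a recurring tiling system. Then 𝒯 has a solution if and only if there exist a Kripke structure K = (X, (→_a)_{a∈Σ}, ρ) over Σ with valuation ρ: X → 2^T and a world x ∈ X such that x satisfies all four of φ_snake, φ_recur, φ_tile, and φ↔↕ (with the atomic proposition t₀ of φ_recur being the distinguished tile type t₀ of 𝒯). -/

import Mathlib

/-- The six-letter alphabet `Σ = {a₁, a₂, b₁, b₂, c, d}`. -/
inductive Letter where
  | a1 | a2 | b1 | b2 | c | d
deriving DecidableEq

instance : Fintype Letter :=
  ⟨{.a1, .a2, .b1, .b2, .c, .d}, by intro x; cases x <;> simp⟩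

/-- `w^i`: the `i`-fold concatenation of the word `w`. -/
def wpow (w : List Letter) (i : ℕ) : List Letter :=
  (List.replicate i w).flatten

/-- Given a Kripke structure with transition relations `R a` for each letter `a`, the
relation `[[w]]` of a word `w`: the relational composition of the `R a` along `w`
(the identity for the empty word). -/
def wordRel {X : Type} (R : Letter → X → X → Prop) : List Letter → X → X → Prop
  | [] => fun x y => x = y
  | a :: w => fun x z => ∃ y, R a x y ∧ wordRel R w y z

/-- `L₀ = {(a₁b₂)^i d (a₂b₁)^j c : i, j ≥ 0, j ≠ i+1}`. -/
def L0 : Set (List Letter) :=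
  {w | ∃ i j : ℕ, j ≠ i + 1 ∧
    w = wpow [.a1, .b2] i ++ [.d] ++ wpow [.a2, .b1] j ++ [.c]}

/-- `L₁ = {(a₂b₁)^i c (a₁b₂)^j d : i, j ≥ 0, j ≠ i+1}`. -/
def L1 : Set (List Letter) :=
  {w | ∃ i j : ℕ, j ≠ i + 1 ∧
    w = wpow [.a2, .b1] i ++ [.c] ++ wpow [.a1, .b2] j ++ [.d]}

/-- The `r`-th block `c (a₁b₂)^{2r+1} d (a₂b₁)^{2r+2}` of the snake word. -/
def snakeBlock (r : ℕ) : List Letter :=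
  [.c] ++ wpow [.a1, .b2] (2 * r + 1) ++ [.d] ++ wpow [.a2, .b1] (2 * r + 2)

/-- The `(p+1)`-st letter of the infinite snake word
`W = c (a₁b₂)^1 d (a₂b₁)^2 c (a₁b₂)^3 d (a₂b₁)^4 c ⋯`
(the concatenation of the first `p+1` blocks has length `> p`, so the `getD` default
is never used). -/
def snakeWord (p : ℕ) : Letter :=
  (((List.range (p + 1)).map snakeBlock).flatten).getD p .c

/-- A snake in a Kripke structure: an infinite path labeled by the snake word `W`. -/
def IsSnake {X : Type} (R : Letter → X → X → Prop) (σ : ℕ → X) : Prop :=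
  ∀ p : ℕ, R (snakeWord p) (σ p) (σ (p + 1))

/-- `(K, x) ⊨ φ_snake`:
(i) `⟨c a₁ b₂ d (a₂b₁)² c⟩ true`;
(ii) `[Σ* c](⟨(a₁b₂)* d⟩ true ∧ [L₀] false)`;
(iii) `[Σ* d](⟨(a₂b₁)* c⟩ true ∧ [L₁] false)`. -/
def PhiSnake {X : Type} (R : Letter → X → X → Prop) (x : X) : Prop :=
  (∃ y, wordRel R [.c, .a1, .b2, .d, .a2, .b1, .a2, .b1, .c] x y) ∧
  (∀ y, (∃ u : List Letter, wordRel R (u ++ [.c]) x y) →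
    (∃ i : ℕ, ∃ z, wordRel R (wpow [.a1, .b2] i ++ [.d]) y z) ∧
    ¬ ∃ z, ∃ w ∈ L0, wordRel R w y z) ∧
  (∀ y, (∃ u : List Letter, wordRel R (u ++ [.d]) x y) →
    (∃ i : ℕ, ∃ z, wordRel R (wpow [.a2, .b1] i ++ [.c]) y z) ∧
    ¬ ∃ z, ∃ w ∈ L1, wordRel R w y z)


/-- Letters of `Σ` extended with the test `t₀?`. -/
inductive Tok where
  | letter (a : Letter)
  | test
deriving DecidableEq

/-- The relation `[[w]]` of a word `w` over `Σ` extended with the test `t₀?`, where the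
test holds at the worlds in `T`: `[[a]] = →_a`, `[[t₀?]] = {(x,x) : T x}`, composed. -/
def tokRel {X : Type} (R : Letter → X → X → Prop) (T : X → Prop) :
    List Tok → X → X → Prop
  | [] => fun x y => x = y
  | .letter a :: w => fun x z => ∃ y, R a x y ∧ tokRel R T w y z
  | .test :: w => fun x z => T x ∧ tokRel R T w x z

/-- Kleene star of a language: all concatenations of finitely many words of `L`. -/
def star {α : Type} (L : Set (List α)) : Set (List α) :=
  {w | ∃ ws : List (List α), (∀ u ∈ ws, u ∈ L) ∧ ws.flatten = w}

/-- `π↕`: the language of the regular expression `(a₁b₂)* d (a₂b₁)* c` over `Σ`. -/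
def piNS : Set (List Letter) :=
  {w | ∃ i j : ℕ, w = wpow [.a1, .b2] i ++ [.d] ++ wpow [.a2, .b1] j ++ [.c]}

/-- `β`: the language of the regular expression
`π↕* ( a₁ b₂ t₀? π↕ ∪ (a₁b₂)* d (a₂b₁)* t₀? c )` over `Σ` extended with the test `t₀?`. -/
def beta : Set (List Tok) :=
  {w | ∃ s v : List Tok,
    (∃ s' ∈ star piNS, s = s'.map Tok.letter) ∧
    ((∃ p ∈ piNS, v = [Tok.letter .a1, Tok.letter .b2, Tok.test] ++ p.map Tok.letter) ∨
     (∃ i j : ℕ, v = (wpow [.a1, .b2] i).map Tok.letter ++ [Tok.letter .d] ++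
        (wpow [.a2, .b1] j).map Tok.letter ++ [Tok.test, Tok.letter .c])) ∧
    w = s ++ v}

/-- `L₀↔ = {(a₁b₂)^t d (a₂b₁)^{t+1} : t ≥ 0}`. -/
def L0ew : Set (List Letter) :=
  {w | ∃ t : ℕ, w = wpow [.a1, .b2] t ++ [.d] ++ wpow [.a2, .b1] (t + 1)}

/-- `L₁↔ = {(a₂b₁)^t c (a₁b₂)^{t+2} : t ≥ 0}`. -/
def L1ew : Set (List Letter) :=
  {w | ∃ t : ℕ, w = wpow [.a2, .b1] t ++ [.c] ++ wpow [.a1, .b2] (t + 2)}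

/-- `L₀↕ = {(a₁b₂)^t d (a₂b₁)^{t+2} : t ≥ 0}`. -/
def L0ns : Set (List Letter) :=
  {w | ∃ t : ℕ, w = wpow [.a1, .b2] t ++ [.d] ++ wpow [.a2, .b1] (t + 2)}

/-- `L₁↕ = {(a₂b₁)^t c (a₁b₂)^{t+1} : t ≥ 0}`. -/
def L1ns : Set (List Letter) :=
  {w | ∃ t : ℕ, w = wpow [.a2, .b1] t ++ [.c] ++ wpow [.a1, .b2] (t + 1)}

/-- `(K, x) ⊨ φ_recur`: for every `y` with `(x, y) ∈ [[Σ* c]]` there is `z` with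
`(y, z) ∈ [[β]]`, where the test `t₀?` holds at worlds whose valuation contains `t₀`. -/
def PhiRecur {X : Type} (R : Letter → X → X → Prop)
    {P : Type} (ρ : X → Set P) (t0 : P) (x : X) : Prop :=
  ∀ y, (∃ u : List Letter, wordRel R (u ++ [.c]) x y) →
    ∃ z, ∃ w ∈ beta, tokRel R (fun v => t0 ∈ ρ v) w y z

/-- `(K, x) ⊨ φ_tile`: every world reachable from `x` satisfies exactly one tile type. -/
def PhiTile {X : Type} (R : Letter → X → X → Prop)
    {T : Type} (ρ : X → Set T) (x : X) : Prop :=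
  ∀ y, (∃ w : List Letter, wordRel R w x y) → ∃! t : T, t ∈ ρ y

/-- `(K, x) ⊨ φ↔↕`: the tile types of horizontally (vertically) related worlds satisfy
the horizontal (vertical) matching relation. -/
def PhiEWNS {X : Type} (R : Letter → X → X → Prop)
    {T : Type} (ρ : X → Set T) (H V : T → T → Prop) (x : X) : Prop :=
  (∀ y, (∃ u : List Letter, ∃ i : ℕ,
      wordRel R (u ++ [.c] ++ wpow [.a1, .b2] (i + 1)) x y) →
    ∀ t ∈ ρ y,
      (∀ z, (∃ w ∈ L0ew, wordRel R w y z) → ∃ t' ∈ ρ z, H t t') ∧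
      (∀ z, (∃ w ∈ L0ns, wordRel R w y z) → ∃ t' ∈ ρ z, V t t')) ∧
  (∀ y, (∃ u : List Letter, ∃ i : ℕ,
      wordRel R (u ++ [.d] ++ wpow [.a2, .b1] (i + 1)) x y) →
    ∀ t ∈ ρ y,
      (∀ z, (∃ w ∈ L1ew, wordRel R w y z) → ∃ t' ∈ ρ z, H t t') ∧
      (∀ z, (∃ w ∈ L1ns, wordRel R w y z) → ∃ t' ∈ ρ z, V t t'))


/-! Block `r` of the snake word `c (a₁b₂)¹ d (a₂b₁)² c (a₁b₂)³ d ⋯` is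
`c (a₁b₂)^(2r+1) d (a₂b₁)^(2r+2)`. Putting the cells of the diagonal `n + m = 2r` after the `b₂`s
of block `r` and those of `n + m = 2r + 1` after its `b₁`s, the factor of the snake word between
horizontally (vertically) adjacent cells is a word of `L₀↔` or `L₁↔` (`L₀↕` or `L₁↕`). So the path
`ℕ` spelling the snake word, with a solution written on its cells, models the four formulas.

Conversely, along a snake prefix ending in a `c`-world, `φ_snake` forces every `π↕`-word to be the
next block of the snake word. Hence `φ_recur` extends every snake prefix through a `t₀`-world on
column `0`, the limit of these extensions is an infinite snake visiting `t₀` on column `0`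
infinitely often, and the tiles of its cells, unique by `φ_tile`, form a solution by `φ↔↕`. -/

lemma exists_eq_of_coherent {α : Type*} {n : ℕ → ℕ} (hn : StrictMono n) {f : ℕ → ℕ → α}
    (hf : ∀ k, ∀ p ≤ n k, f (k + 1) p = f k p) :
    ∃ g : ℕ → α, ∀ k, ∀ p ≤ n k, g p = f k p := by
  have chain : ∀ k j, k ≤ j → ∀ p ≤ n k, f j p = f k p := by
    intro k j hkj
    induction j, hkj using Nat.le_induction with
    | base => exact fun _ _ => rfl
    | succ j hkj ih => exact fun p hp => (hf j p (hp.trans (hn.monotone hkj))).trans (ih p hp)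
  refine ⟨fun p => f p p, fun k p hp => ?_⟩
  rcases le_total k p with hkp | hpk
  · exact chain k p hkp p hp
  · exact (chain p k hpk p (hn.id_le p)).symm

@[simp] lemma wpow_zero (w : List Letter) : wpow w 0 = [] := rfl

lemma wpow_add (w : List Letter) (m n : ℕ) : wpow w (m + n) = wpow w m ++ wpow w n := by
  simp only [wpow, List.replicate_add, List.flatten_append]

lemma wpow_succ (w : List Letter) (n : ℕ) : wpow w (n + 1) = w ++ wpow w n := by
  simp [wpow, List.replicate_succ]

@[simp] lemma length_wpow (w : List Letter) (n : ℕ) : (wpow w n).length = n * w.length := by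
  simp [wpow]

lemma mem_of_mem_wpow {a : Letter} {w : List Letter} {n : ℕ} (h : a ∈ wpow w n) : a ∈ w := by
  simp only [wpow, List.mem_flatten, List.mem_replicate] at h
  obtain ⟨_, ⟨-, rfl⟩, ha⟩ := h
  exact ha

lemma wordRel_append {X : Type} (R : Letter → X → X → Prop) (u v : List Letter) (x z : X) :
    wordRel R (u ++ v) x z ↔ ∃ y, wordRel R u x y ∧ wordRel R v y z := by
  induction u generalizing x with
  | nil => simp [wordRel]
  | cons a u ih => simp only [List.cons_append, wordRel, ih]; aesop

lemma tokRel_append {X : Type} (R : Letter → X → X → Prop) (P : X → Prop) (u v : List Tok)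
    (x z : X) : tokRel R P (u ++ v) x z ↔ ∃ y, tokRel R P u x y ∧ tokRel R P v y z := by
  induction u generalizing x with
  | nil => simp [tokRel]
  | cons a u ih => cases a <;> simp only [List.cons_append, tokRel, ih] <;> aesop

lemma tokRel_map_letter {X : Type} (R : Letter → X → X → Prop) (P : X → Prop) (w : List Letter)
    (x z : X) : tokRel R P (w.map Tok.letter) x z ↔ wordRel R w x z := by
  induction w generalizing x with
  | nil => rfl
  | cons a w ih => simp only [List.map_cons, tokRel, wordRel, ih]

lemma tokRel_map_append_test {X : Type} (R : Letter → X → X → Prop) (P : X → Prop)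
    (u : List Letter) (v : List Tok) (x z : X) :
    tokRel R P (u.map Tok.letter ++ Tok.test :: v) x z ↔
      ∃ y, wordRel R u x y ∧ P y ∧ tokRel R P v y z := by
  simp only [tokRel_append, tokRel_map_letter, tokRel]

@[simp] lemma length_snakeBlock (r : ℕ) : (snakeBlock r).length = 8 * r + 8 := by
  simp [snakeBlock]; ring

def blockStart (r : ℕ) : ℕ := 4 * r * (r + 1)

lemma blockStart_succ (r : ℕ) : blockStart (r + 1) = blockStart r + 8 * r + 8 := by
  unfold blockStart; ring

lemma blockStart_strictMono : StrictMono blockStart :=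
  strictMono_nat_of_lt_succ fun r => by rw [blockStart_succ]; omega

lemma length_flatten_snakeBlock (r : ℕ) :
    ((List.range r).map snakeBlock).flatten.length = blockStart r := by
  induction r with
  | zero => rfl
  | succ r ih =>
    simp [List.range_succ, ih, blockStart_succ, add_assoc]

lemma snakeWord_eq_getD {p r : ℕ} (hp : p < blockStart r) :
    snakeWord p = ((List.range r).map snakeBlock).flatten.getD p .c := by
  have key : ∀ r r', r ≤ r' → p < blockStart r →
      ((List.range r).map snakeBlock).flatten.getD p .c =
        ((List.range r').map snakeBlock).flatten.getD p .c := by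
    intro r r' hrr' hp
    induction r', hrr' using Nat.le_induction with
    | base => rfl
    | succ r' hle ih =>
      rw [ih, List.range_succ, List.map_append, List.flatten_append, List.getD_append]
      rw [length_flatten_snakeBlock]
      exact hp.trans_le (blockStart_strictMono.monotone hle)
  have hp' : p < blockStart (p + 1) := by rw [blockStart_succ]; omega
  rcases le_total r (p + 1) with h | h
  · exact (key r (p + 1) h hp).symm
  · exact key (p + 1) r h hp'

def snakeFactor (p n : ℕ) : List Letter := (List.range n).map fun i => snakeWord (p + i)

@[simp] lemma length_snakeFactor (p n : ℕ) : (snakeFactor p n).length = n := by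
  simp [snakeFactor]

lemma snakeFactor_add (p m n : ℕ) :
    snakeFactor p (m + n) = snakeFactor p m ++ snakeFactor (p + m) n := by
  simp [snakeFactor, List.range_add, add_assoc]

def OccursAt (w : List Letter) (p : ℕ) : Prop := snakeFactor p w.length = w

lemma occursAt_snakeFactor (p n : ℕ) : OccursAt (snakeFactor p n) p := by
  simp [OccursAt]

lemma occursAt_append {u v : List Letter} {p : ℕ} :
    OccursAt (u ++ v) p ↔ OccursAt u p ∧ OccursAt v (p + u.length) := by
  unfold OccursAt
  rw [List.length_append, snakeFactor_add]
  exact ⟨fun h => List.append_inj h (by simp), fun ⟨hu, hv⟩ => by rw [hu, hv]⟩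

lemma OccursAt.append {u v : List Letter} {p q : ℕ} (hu : OccursAt u p) (hv : OccursAt v q)
    (hq : p + u.length = q) : OccursAt (u ++ v) p :=
  occursAt_append.2 ⟨hu, hq ▸ hv⟩

lemma occursAt_singleton {a : Letter} {p : ℕ} : OccursAt [a] p ↔ snakeWord p = a := by
  simp [OccursAt, snakeFactor]

lemma occursAt_cons {a : Letter} {w : List Letter} {p : ℕ} :
    OccursAt (a :: w) p ↔ snakeWord p = a ∧ OccursAt w (p + 1) := by
  rw [← List.singleton_append, occursAt_append, occursAt_singleton, List.length_singleton]

lemma OccursAt.snakeWord_mem {w : List Letter} {p i : ℕ} (h : OccursAt w p)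
    (hi : i < w.length) : snakeWord (p + i) ∈ w := by
  have : snakeWord (p + i) ∈ snakeFactor p w.length :=
    List.mem_map.2 ⟨i, List.mem_range.2 hi, rfl⟩
  rwa [h] at this

lemma OccursAt.wpow_of_add_le {w : List Letter} {p K k t : ℕ} (h : OccursAt (wpow w K) p)
    (hkt : k + t ≤ K) : OccursAt (wpow w t) (p + k * w.length) := by
  obtain ⟨l, rfl⟩ : ∃ l, K = k + t + l := ⟨K - (k + t), by omega⟩
  rw [wpow_add, wpow_add, occursAt_append, occursAt_append] at h
  simpa using h.1.2

lemma occursAt_snakeBlock (r : ℕ) : OccursAt (snakeBlock r) (blockStart r) := by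
  unfold OccursAt
  apply List.ext_getElem (by simp)
  intro i h₁ h₂
  simp only [snakeFactor, List.getElem_map, List.getElem_range]
  have hB := length_flatten_snakeBlock r
  rw [snakeWord_eq_getD (r := r + 1), List.range_succ, List.map_append, List.flatten_append,
    List.getD_append_right _ _ _ _ (by omega), hB, Nat.add_sub_cancel_left]
  · simpa using List.getD_eq_getElem _ _ h₂
  · rw [blockStart_succ]; rw [length_snakeBlock] at h₂; omega

lemma occursAt_snakeBlock_parts (r : ℕ) :
    snakeWord (blockStart r) = .c ∧
    OccursAt (wpow [.a1, .b2] (2 * r + 1)) (blockStart r + 1) ∧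
    snakeWord (blockStart r + 4 * r + 3) = .d ∧
    OccursAt (wpow [.a2, .b1] (2 * r + 2)) (blockStart r + 4 * r + 4) := by
  have h := occursAt_snakeBlock r
  simp only [snakeBlock, List.append_assoc, occursAt_append, occursAt_singleton] at h
  refine ⟨h.1, h.2.1, ?_, ?_⟩
  · convert h.2.2.1 using 2; simp only [length_wpow, List.length_cons, List.length_nil]; ring
  · convert h.2.2.2 using 1; simp; ring

lemma snakeWord_blockStart (r : ℕ) : snakeWord (blockStart r) = .c :=
  (occursAt_snakeBlock_parts r).1

lemma snakeWord_d (r : ℕ) : snakeWord (blockStart r + 4 * r + 3) = .d :=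
  (occursAt_snakeBlock_parts r).2.2.1

lemma occursAt_a1b2 {r k t : ℕ} (h : k + t ≤ 2 * r + 1) :
    OccursAt (wpow [.a1, .b2] t) (blockStart r + 2 * k + 1) := by
  convert (occursAt_snakeBlock_parts r).2.1.wpow_of_add_le h using 1
  simp; ring

lemma occursAt_a2b1 {r k t : ℕ} (h : k + t ≤ 2 * r + 2) :
    OccursAt (wpow [.a2, .b1] t) (blockStart r + 4 * r + 2 * k + 4) := by
  convert (occursAt_snakeBlock_parts r).2.2.2.wpow_of_add_le h using 1
  simp; ring

lemma occursAt_ascent {r k t j : ℕ} (hk : k + t = 2 * r + 1) (hj : j ≤ 2 * r + 2) :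
    OccursAt (wpow [.a1, .b2] t ++ [.d] ++ wpow [.a2, .b1] j) (blockStart r + 2 * k + 1) :=
  ((occursAt_a1b2 hk.le).append (occursAt_singleton.2 (snakeWord_d r)) (by simp; omega)).append
    (occursAt_a2b1 (r := r) (k := 0) (t := j) (by omega)) (by simp; omega)

lemma occursAt_descent {r k t j : ℕ} (hk : k + t = 2 * r + 2) (hj : j ≤ 2 * r + 3) :
    OccursAt (wpow [.a2, .b1] t ++ [.c] ++ wpow [.a1, .b2] j)
      (blockStart r + 4 * r + 2 * k + 4) :=
  ((occursAt_a2b1 hk.le).append (occursAt_singleton.2 (snakeWord_blockStart (r + 1)))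
    (by simp [blockStart_succ]; omega)).append
    (occursAt_a1b2 (r := r + 1) (k := 0) (by omega)) (by simp [blockStart_succ]; omega)

def shiftedBlock (r : ℕ) : List Letter :=
  wpow [.a1, .b2] (2 * r + 1) ++ [.d] ++ wpow [.a2, .b1] (2 * r + 2) ++ [.c]

lemma shiftedBlock_mem_piNS (r : ℕ) : shiftedBlock r ∈ piNS := ⟨_, _, rfl⟩

lemma shiftedBlock_eq_cons (r : ℕ) : shiftedBlock r =
    .a1 :: .b2 :: (wpow [.a1, .b2] (2 * r) ++ [.d] ++ wpow [.a2, .b1] (2 * r + 2) ++ [.c]) := by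
  simp [shiftedBlock, wpow_succ]

lemma blockStart_add_length_shiftedBlock (r : ℕ) :
    blockStart r + 1 + (shiftedBlock r).length = blockStart (r + 1) + 1 := by
  simp [shiftedBlock, blockStart_succ]; ring

lemma occursAt_shiftedBlock (r : ℕ) : OccursAt (shiftedBlock r) (blockStart r + 1) :=
  (occursAt_ascent (k := 0) (by omega) le_rfl).append
    (occursAt_singleton.2 (snakeWord_blockStart (r + 1))) (by simp [blockStart_succ]; omega)

lemma occursAt_initial : OccursAt [.c, .a1, .b2, .d, .a2, .b1, .a2, .b1, .c] 0 := by
  unfold OccursAt; decide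

lemma OccursAt.wpow_exponent_eq {a b e : Letter} (he : e ≠ a) {i j p : ℕ}
    (hi : OccursAt (wpow [a, b] i ++ [e]) p) (hj : OccursAt (wpow [a, b] j ++ [e]) p) :
    i = j := by
  have key : ∀ i j, i < j → OccursAt (wpow [a, b] i ++ [e]) p →
      OccursAt (wpow [a, b] j ++ [e]) p → False := by
    intro i j hij hi hj
    obtain ⟨l, rfl⟩ : ∃ l, j = i + (l + 1) := ⟨j - i - 1, by omega⟩
    rw [wpow_add, wpow_succ, List.append_assoc, occursAt_append, List.append_assoc,
      List.cons_append, occursAt_cons] at hj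
    rw [occursAt_append, occursAt_singleton] at hi
    exact he (hi.2.symm.trans hj.2.1)
  rcases lt_trichotomy i j with h | h | h
  exacts [(key i j h hi hj).elim, h, (key j i h hj hi).elim]

lemma occursAt_a1b2_d_iff {r k : ℕ} :
    OccursAt (wpow [.a1, .b2] k ++ [.d]) (blockStart r + 1) ↔ k = 2 * r + 1 := by
  have h : OccursAt (wpow [.a1, .b2] (2 * r + 1) ++ [.d]) (blockStart r + 1) := by
    simpa using occursAt_ascent (r := r) (k := 0) (j := 0) (by omega) (by omega)
  exact ⟨fun hk => hk.wpow_exponent_eq (by decide) h, fun hk => hk ▸ h⟩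

lemma occursAt_a2b1_c_iff {r k : ℕ} :
    OccursAt (wpow [.a2, .b1] k ++ [.c]) (blockStart r + 4 * r + 4) ↔ k = 2 * r + 2 := by
  have h : OccursAt (wpow [.a2, .b1] (2 * r + 2) ++ [.c]) (blockStart r + 4 * r + 4) := by
    simpa using occursAt_descent (r := r) (k := 0) (j := 0) (by omega) (by omega)
  exact ⟨fun hk => hk.wpow_exponent_eq (by decide) h, fun hk => hk ▸ h⟩

lemma exists_eq_blockStart_add (p : ℕ) : ∃ r q, p = blockStart r + q ∧ q < 8 * r + 8 := by
  induction p with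
  | zero => exact ⟨0, 0, rfl, by omega⟩
  | succ p ih =>
    obtain ⟨r, q, rfl, hq⟩ := ih
    by_cases h : q + 1 < 8 * r + 8
    · exact ⟨r, q + 1, rfl, h⟩
    · exact ⟨r + 1, 0, by rw [blockStart_succ]; omega, by omega⟩

lemma snakeWord_cases (p : ℕ) : ∃ r, p = blockStart r ∨ p = blockStart r + 4 * r + 3 ∨
    snakeWord p ∈ [.a1, .b2] ∨ snakeWord p ∈ [.a2, .b1] := by
  obtain ⟨r, q, rfl, hq⟩ := exists_eq_blockStart_add p
  refine ⟨r, ?_⟩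
  by_cases h₀ : q = 0
  · exact .inl (by omega)
  by_cases h₁ : q ≤ 4 * r + 2
  · have := (occursAt_a1b2 (r := r) (k := 0) (t := 2 * r + 1) (by omega)).snakeWord_mem
      (i := q - 1) (by simp; omega)
    exact .inr (.inr (.inl (mem_of_mem_wpow (by convert this using 2; omega))))
  by_cases h₂ : q = 4 * r + 3
  · exact .inr (.inl (by omega))
  · have := (occursAt_a2b1 (r := r) (k := 0) (t := 2 * r + 2) (by omega)).snakeWord_mem
      (i := q - (4 * r + 4)) (by simp; omega)
    exact .inr (.inr (.inr (mem_of_mem_wpow (by convert this using 2; omega))))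

lemma exists_eq_blockStart_of_snakeWord_eq_c {p : ℕ} (h : snakeWord p = .c) :
    ∃ r, p = blockStart r := by
  obtain ⟨r, hp | hp | hp | hp⟩ := snakeWord_cases p
  · exact ⟨r, hp⟩
  · rw [hp, snakeWord_d] at h; cases h
  all_goals simp [h] at hp

lemma exists_eq_of_snakeWord_eq_d {p : ℕ} (h : snakeWord p = .d) :
    ∃ r, p = blockStart r + 4 * r + 3 := by
  obtain ⟨r, hp | hp | hp | hp⟩ := snakeWord_cases p
  · rw [hp, snakeWord_blockStart] at h; cases h
  · exact ⟨r, hp⟩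
  all_goals simp [h] at hp

/-- The position of the world carrying the tile of `(n, m)`: after the `(n + 1)`-st `b₂` of
block `r` if `n + m = 2r`, after the `(m + 1)`-st `b₁` of block `r` if `n + m = 2r + 1`. -/
def cell (n m : ℕ) : ℕ :=
  if (n + m) % 2 = 0 then blockStart ((n + m) / 2) + 2 * (n + 1) + 1
  else blockStart ((n + m) / 2) + 4 * ((n + m) / 2) + 2 * (m + 1) + 4

lemma cell_of_add_eq_even {n m r : ℕ} (h : n + m = 2 * r) :
    cell n m = blockStart r + 2 * (n + 1) + 1 := by
  rw [cell, if_pos (by omega), show (n + m) / 2 = r by omega]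

lemma cell_of_add_eq_odd {n m r : ℕ} (h : n + m = 2 * r + 1) :
    cell n m = blockStart r + 4 * r + 2 * (m + 1) + 4 := by
  rw [cell, if_neg (by omega), show (n + m) / 2 = r by omega]

lemma cell_mem_block (n m : ℕ) :
    blockStart ((n + m) / 2) + 3 ≤ cell n m ∧ cell n m ≤ blockStart ((n + m) / 2 + 1) := by
  rw [blockStart_succ]
  rcases Nat.even_or_odd' (n + m) with ⟨r, hr | hr⟩
  · rw [cell_of_add_eq_even hr, show (n + m) / 2 = r by omega]; omega
  · rw [cell_of_add_eq_odd hr, show (n + m) / 2 = r by omega]; omega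

lemma cell_injective : Function.Injective (Function.uncurry cell) := by
  rintro ⟨n, m⟩ ⟨n', m'⟩ h
  simp only [Function.uncurry_apply_pair] at h
  have hblock : (n + m) / 2 = (n' + m') / 2 := by
    have hmono := blockStart_strictMono.monotone
    have := cell_mem_block n m
    have := cell_mem_block n' m'
    by_contra hne
    rcases Nat.lt_or_gt_of_ne hne with hlt | hlt
    · have := hmono (show (n + m) / 2 + 1 ≤ (n' + m') / 2 by omega); omega
    · have := hmono (show (n' + m') / 2 + 1 ≤ (n + m) / 2 by omega); omega
  simp only [cell, hblock] at h
  simp only [Prod.mk.injEq]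
  split_ifs at h <;> omega

def snakeRel (a : Letter) (p q : ℕ) : Prop := snakeWord p = a ∧ q = p + 1

lemma wordRel_snakeRel_iff {w : List Letter} {p q : ℕ} :
    wordRel snakeRel w p q ↔ OccursAt w p ∧ q = p + w.length := by
  induction w generalizing p with
  | nil => simp [wordRel, OccursAt, snakeFactor, eq_comm]
  | cons a w ih =>
    simp only [wordRel, snakeRel, ih, occursAt_cons, List.length_cons]
    constructor
    · rintro ⟨_, ⟨ha, rfl⟩, hw, rfl⟩
      exact ⟨⟨ha, hw⟩, by ring⟩
    · rintro ⟨⟨ha, hw⟩, rfl⟩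
      exact ⟨_, ⟨ha, rfl⟩, hw, by ring⟩

lemma wordRel_snakeRel_of_occursAt {w : List Letter} {p q : ℕ} (h : OccursAt w p)
    (hq : p + w.length = q) : wordRel snakeRel w p q :=
  wordRel_snakeRel_iff.2 ⟨h, hq.symm⟩

lemma exists_eq_of_wordRel_snakeRel_c {u : List Letter} {y : ℕ}
    (h : wordRel snakeRel (u ++ [.c]) 0 y) : ∃ r, y = blockStart r + 1 := by
  rw [wordRel_snakeRel_iff, occursAt_append, occursAt_singleton] at h
  obtain ⟨r, hr⟩ := exists_eq_blockStart_of_snakeWord_eq_c h.1.2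
  exact ⟨r, by simp at h hr; omega⟩

lemma exists_eq_of_wordRel_snakeRel_d {u : List Letter} {y : ℕ}
    (h : wordRel snakeRel (u ++ [.d]) 0 y) : ∃ r, y = blockStart r + 4 * r + 4 := by
  rw [wordRel_snakeRel_iff, occursAt_append, occursAt_singleton] at h
  obtain ⟨r, hr⟩ := exists_eq_of_snakeWord_eq_d h.1.2
  exact ⟨r, by simp at h hr; omega⟩

lemma exists_star_piNS_occursAt {r s : ℕ} (h : r ≤ s) : ∃ w ∈ star piNS,
    OccursAt w (blockStart r + 1) ∧ blockStart r + 1 + w.length = blockStart s + 1 := by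
  induction s, h using Nat.le_induction with
  | base => exact ⟨[], ⟨[], by simp, rfl⟩, by simp [OccursAt, snakeFactor], rfl⟩
  | succ s _ ih =>
    obtain ⟨_, ⟨ws, hws, rfl⟩, hocc, hlen⟩ := ih
    refine ⟨ws.flatten ++ shiftedBlock s, ⟨ws ++ [shiftedBlock s], ?_, by simp⟩,
      hocc.append (occursAt_shiftedBlock s) hlen, ?_⟩
    · simpa [or_imp, forall_and] using ⟨hws, shiftedBlock_mem_piNS s⟩
    · rw [List.length_append, ← add_assoc, hlen, blockStart_add_length_shiftedBlock]

lemma ascent_of_wordRel_snakeRel {r k t j p z : ℕ}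
    (hk : OccursAt (wpow [.a1, .b2] k) (blockStart r + 1)) (hp : blockStart r + 1 + 2 * k = p)
    (h : wordRel snakeRel (wpow [.a1, .b2] t ++ [.d] ++ wpow [.a2, .b1] j) p z) :
    k + t = 2 * r + 1 ∧ z = p + 2 * t + 1 + 2 * j := by
  obtain ⟨hw, rfl⟩ := wordRel_snakeRel_iff.1 h
  have := hk.append hw (by simp; omega)
  rw [← List.append_assoc, ← List.append_assoc, ← wpow_add, occursAt_append,
    occursAt_a1b2_d_iff] at this
  exact ⟨by omega, by simp; ring⟩

lemma descent_of_wordRel_snakeRel {r k t j p z : ℕ}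
    (hk : OccursAt (wpow [.a2, .b1] k) (blockStart r + 4 * r + 4))
    (hp : blockStart r + 4 * r + 4 + 2 * k = p)
    (h : wordRel snakeRel (wpow [.a2, .b1] t ++ [.c] ++ wpow [.a1, .b2] j) p z) :
    k + t = 2 * r + 2 ∧ z = p + 2 * t + 1 + 2 * j := by
  obtain ⟨hw, rfl⟩ := wordRel_snakeRel_iff.1 h
  have := hk.append hw (by simp; omega)
  rw [← List.append_assoc, ← List.append_assoc, ← wpow_add, occursAt_append,
    occursAt_a2b1_c_iff] at this
  exact ⟨by omega, by simp; ring⟩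

lemma phiSnake_snakeRel : PhiSnake snakeRel 0 := by
  refine ⟨⟨9, wordRel_snakeRel_of_occursAt occursAt_initial rfl⟩, ?_, ?_⟩
  · rintro y ⟨u, hu⟩
    obtain ⟨r, rfl⟩ := exists_eq_of_wordRel_snakeRel_c hu
    refine ⟨⟨2 * r + 1, _, wordRel_snakeRel_of_occursAt (occursAt_a1b2_d_iff.2 rfl) rfl⟩, ?_⟩
    rintro ⟨z, _, ⟨i, j, hne, rfl⟩, hz⟩
    have hw := (wordRel_snakeRel_iff.1 hz).1
    rw [List.append_assoc _ (wpow _ j), occursAt_append, occursAt_a1b2_d_iff] at hw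
    obtain ⟨rfl, hw⟩ := hw
    have : j = 2 * r + 2 := occursAt_a2b1_c_iff.1 ((congrArg (OccursAt _) (by simp; ring)).mp hw)
    omega
  · rintro y ⟨u, hu⟩
    obtain ⟨r, rfl⟩ := exists_eq_of_wordRel_snakeRel_d hu
    refine ⟨⟨2 * r + 2, _, wordRel_snakeRel_of_occursAt (occursAt_a2b1_c_iff.2 rfl) rfl⟩, ?_⟩
    rintro ⟨z, _, ⟨i, j, hne, rfl⟩, hz⟩
    have hw := (wordRel_snakeRel_iff.1 hz).1
    rw [List.append_assoc _ (wpow _ j), occursAt_append, occursAt_a2b1_c_iff] at hw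
    obtain ⟨rfl, hw⟩ := hw
    have : j = 2 * (r + 1) + 1 :=
      occursAt_a1b2_d_iff.1 ((congrArg (OccursAt _) (by simp [blockStart_succ]; ring)).mp hw)
    omega

section SnakeModel

variable {T : Type} (μ : ℕ → ℕ → T) (t0 : T)

noncomputable def snakeTile : ℕ → T :=
  Function.extend (Function.uncurry cell) (Function.uncurry μ) fun _ => t0

lemma snakeTile_of_cell_eq {n m p : ℕ} (h : cell n m = p) : snakeTile μ t0 p = μ n m :=
  h ▸ cell_injective.extend_apply _ _ (n, m)

lemma phiTile_snakeRel : PhiTile snakeRel (fun p => {snakeTile μ t0 p}) 0 :=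
  fun y _ => ⟨snakeTile μ t0 y, rfl, fun _ ht => ht⟩

variable {μ t0}

lemma phiRecur_snakeRel (hμ : {m : ℕ | μ 0 m = t0}.Infinite) :
    PhiRecur snakeRel (fun p => {snakeTile μ t0 p}) t0 0 := by
  rintro y ⟨u, hu⟩
  obtain ⟨r, rfl⟩ := exists_eq_of_wordRel_snakeRel_c hu
  obtain ⟨m, hm, hrm⟩ := hμ.exists_gt (2 * r)
  have ht0 : t0 ∈ ({snakeTile μ t0 (cell 0 m)} : Set T) := by
    rw [snakeTile_of_cell_eq μ t0 rfl]; exact hm.symm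
  obtain ⟨s, hs⟩ := Nat.even_or_odd' m
  obtain ⟨w, hw, hocc, hlen⟩ := exists_star_piNS_occursAt (r := r) (s := s) (by omega)
  have hstar := (tokRel_map_letter snakeRel (fun p => t0 ∈ ({snakeTile μ t0 p} : Set T)) w _ _).2
    (wordRel_snakeRel_of_occursAt hocc hlen)
  have hblock := occursAt_shiftedBlock s
  rcases hs with rfl | rfl
  · rw [shiftedBlock_eq_cons, occursAt_cons, occursAt_cons] at hblock
    rw [cell_of_add_eq_even (r := s) (by omega)] at ht0
    exact ⟨_, _, ⟨_, _, ⟨w, hw, rfl⟩, .inl ⟨_, ⟨2 * s, 2 * s + 2, rfl⟩, rfl⟩, rfl⟩,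
      (tokRel_append ..).2 ⟨_, hstar, _, ⟨hblock.1, rfl⟩, _, ⟨hblock.2.1, rfl⟩, ht0,
        (tokRel_map_letter ..).2 (wordRel_snakeRel_of_occursAt hblock.2.2 rfl)⟩⟩
  · rw [shiftedBlock, occursAt_append, occursAt_singleton] at hblock
    refine ⟨blockStart (s + 1) + 1, w.map Tok.letter ++
      ((wpow [.a1, .b2] (2 * s + 1) ++ [Letter.d] ++ wpow [.a2, .b1] (2 * s + 2)).map Tok.letter ++
        [Tok.test, Tok.letter .c]), ⟨_, _, ⟨w, hw, rfl⟩, .inr ⟨2 * s + 1, 2 * s + 2, by simp⟩, rfl⟩,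
      (tokRel_append ..).2 ⟨_, hstar, (tokRel_map_append_test _ _ _ [Tok.letter .c] _ _).2
        ⟨_, wordRel_snakeRel_of_occursAt hblock.1 rfl, ?_, _, ⟨hblock.2, rfl⟩, ?_⟩⟩⟩
    · convert ht0 using 3
      rw [cell_of_add_eq_odd (r := s) (by omega)]
      simp; ring
    · simp [tokRel, blockStart_succ]; ring

lemma phiEWNS_snakeRel {H V : T → T → Prop}
    (hμ : ∀ n m, H (μ n m) (μ (n + 1) m) ∧ V (μ n m) (μ n (m + 1))) :
    PhiEWNS snakeRel (fun p => {snakeTile μ t0 p}) H V 0 := by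
  constructor
  · rintro y ⟨u, i, hu⟩ _ rfl
    obtain ⟨y', hy', hy⟩ := (wordRel_append ..).1 hu
    obtain ⟨r, rfl⟩ := exists_eq_of_wordRel_snakeRel_c hy'
    obtain ⟨hi, rfl⟩ := wordRel_snakeRel_iff.1 hy
    constructor
    · rintro z ⟨_, ⟨m, rfl⟩, hz⟩
      obtain ⟨hm, rfl⟩ := ascent_of_wordRel_snakeRel hi (by simp; ring) hz
      refine ⟨_, rfl, ?_⟩
      convert (hμ i m).1 using 1 <;> apply snakeTile_of_cell_eq
      · rw [cell_of_add_eq_even (r := r) (by omega)]; simp; ring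
      · rw [cell_of_add_eq_odd (r := r) (by omega)]; simp; omega
    · rintro z ⟨_, ⟨m, rfl⟩, hz⟩
      obtain ⟨hm, rfl⟩ := ascent_of_wordRel_snakeRel hi (by simp; ring) hz
      refine ⟨_, rfl, ?_⟩
      convert (hμ i m).2 using 1 <;> apply snakeTile_of_cell_eq
      · rw [cell_of_add_eq_even (r := r) (by omega)]; simp; ring
      · rw [cell_of_add_eq_odd (r := r) (by omega)]; simp; omega
  · rintro y ⟨u, i, hu⟩ _ rfl
    obtain ⟨y', hy', hy⟩ := (wordRel_append ..).1 hu
    obtain ⟨r, rfl⟩ := exists_eq_of_wordRel_snakeRel_d hy'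
    obtain ⟨hi, rfl⟩ := wordRel_snakeRel_iff.1 hy
    constructor
    · rintro z ⟨_, ⟨n, rfl⟩, hz⟩
      obtain ⟨hn, rfl⟩ := descent_of_wordRel_snakeRel hi (by simp; ring) hz
      refine ⟨_, rfl, ?_⟩
      convert (hμ n i).1 using 1 <;> apply snakeTile_of_cell_eq
      · rw [cell_of_add_eq_odd (r := r) (by omega)]; simp; ring
      · rw [cell_of_add_eq_even (r := r + 1) (by omega), blockStart_succ]; simp; omega
    · rintro z ⟨_, ⟨n, rfl⟩, hz⟩
      obtain ⟨hn, rfl⟩ := descent_of_wordRel_snakeRel hi (by simp; ring) hz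
      refine ⟨_, rfl, ?_⟩
      convert (hμ n i).2 using 1 <;> apply snakeTile_of_cell_eq
      · rw [cell_of_add_eq_odd (r := r) (by omega)]; simp; ring
      · rw [cell_of_add_eq_even (r := r + 1) (by omega), blockStart_succ]; simp; omega

end SnakeModel

section Backward

variable {X : Type} {R : Letter → X → X → Prop} {x : X}

def IsSnakePrefix (R : Letter → X → X → Prop) (x : X) (σ : ℕ → X) (n : ℕ) : Prop :=
  σ 0 = x ∧ ∀ p < n, R (snakeWord p) (σ p) (σ (p + 1))

namespace IsSnakePrefix

variable {σ : ℕ → X} {n r s : ℕ}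

lemma wordRel_of_occursAt (h : IsSnakePrefix R x σ n) {w : List Letter} {p q : ℕ}
    (hw : OccursAt w p) (hq : p + w.length = q) (hqn : q ≤ n) : wordRel R w (σ p) (σ q) := by
  subst hq
  induction w generalizing p with
  | nil => rfl
  | cons a w ih =>
    rw [occursAt_cons] at hw
    refine ⟨σ (p + 1), hw.1 ▸ h.2 p (by simp at hqn; omega), ?_⟩
    convert ih hw.2 (by simp at hqn ⊢; omega) using 2
    simp; ring

lemma exists_wordRel_c (h : IsSnakePrefix R x σ n) (hr : blockStart r + 1 ≤ n) :
    ∃ u, wordRel R (u ++ [.c]) x (σ (blockStart r + 1)) :=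
  ⟨snakeFactor 0 (blockStart r), h.1 ▸ h.wordRel_of_occursAt
    ((occursAt_snakeFactor 0 _).append (occursAt_singleton.2 (snakeWord_blockStart r)) (by simp))
    (by simp) hr⟩

lemma exists_wordRel_d (h : IsSnakePrefix R x σ n) (hr : blockStart r + 4 * r + 4 ≤ n) :
    ∃ u, wordRel R (u ++ [.d]) x (σ (blockStart r + 4 * r + 4)) :=
  ⟨snakeFactor 0 (blockStart r + 4 * r + 3), h.1 ▸ h.wordRel_of_occursAt
    ((occursAt_snakeFactor 0 _).append (occursAt_singleton.2 (snakeWord_d r)) (by simp))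
    (by simp) hr⟩

lemma extend (h : IsSnakePrefix R x σ n) {w : List Letter} (hw : OccursAt w n) {z : X}
    (hz : wordRel R w (σ n) z) : ∃ σ', IsSnakePrefix R x σ' (n + w.length) ∧
      (∀ p ≤ n, σ' p = σ p) ∧ σ' (n + w.length) = z := by
  induction w generalizing n σ with
  | nil => exact ⟨σ, h, fun _ _ => rfl, hz⟩
  | cons a w ih =>
    obtain ⟨y, hy, hz⟩ := hz
    rw [occursAt_cons] at hw
    have h' : IsSnakePrefix R x (Function.update σ (n + 1) y) (n + 1) := by
      refine ⟨by rw [Function.update_of_ne (by omega)]; exact h.1, fun p hp => ?_⟩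
      rcases Nat.lt_succ_iff_lt_or_eq.1 hp with hp | rfl
      · rw [Function.update_of_ne (by omega), Function.update_of_ne (by omega)]
        exact h.2 p hp
      · rw [Function.update_of_ne (by omega), Function.update_self, hw.1]
        exact hy
    obtain ⟨σ', h₁, h₂, h₃⟩ := ih h' hw.2 (by rwa [Function.update_self])
    rw [List.length_cons, ← add_assoc, add_right_comm]
    exact ⟨σ', h₁, fun p hp => by rw [h₂ p (by omega), Function.update_of_ne (by omega)], h₃⟩

lemma eq_shiftedBlock (h : IsSnakePrefix R x σ (blockStart r + 1)) (hx : PhiSnake R x)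
    (hr : 1 ≤ r) {w : List Letter} (hw : w ∈ piNS) {z : X}
    (hz : wordRel R w (σ (blockStart r + 1)) z) : w = shiftedBlock r := by
  -- `L₀` read from this `c`-world forces `j = i + 1`; `L₁` read from the `d`-world of the
  -- previous block forces `i = 2r + 1`.
  obtain ⟨i, j, rfl⟩ := hw
  have hj : j = i + 1 := by
    by_contra hne
    exact (hx.2.1 _ (h.exists_wordRel_c le_rfl)).2 ⟨z, _, ⟨i, j, hne, rfl⟩, hz⟩
  obtain ⟨r, rfl⟩ : ∃ r', r = r' + 1 := ⟨r - 1, by omega⟩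
  obtain ⟨y₁, hz₁, -⟩ := (wordRel_append ..).1 hz
  obtain ⟨y₂, hz₂, -⟩ := (wordRel_append ..).1 hz₁
  have hdescent : wordRel R (wpow [.a2, .b1] (2 * r + 2) ++ [.c])
      (σ (blockStart r + 4 * r + 4)) (σ (blockStart (r + 1) + 1)) :=
    h.wordRel_of_occursAt
      (by simpa using occursAt_descent (r := r) (k := 0) (j := 0) (by omega) (by omega))
      (by simp [blockStart_succ]; ring) le_rfl
  have hi : i = 2 * r + 3 := by
    by_contra hne
    refine (hx.2.2 _ (h.exists_wordRel_d (r := r) (by rw [blockStart_succ]; omega))).2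
      ⟨y₂, _, ⟨2 * r + 2, i, by omega, rfl⟩, ?_⟩
    rw [List.append_assoc _ (wpow _ i)]
    exact (wordRel_append ..).2 ⟨_, hdescent, hz₂⟩
  subst hj hi
  simp only [shiftedBlock]
  ring_nf

lemma extend_star (h : IsSnakePrefix R x σ (blockStart r + 1)) (hx : PhiSnake R x) (hr : 1 ≤ r)
    {w : List Letter} (hw : w ∈ star piNS) {z : X} (hz : wordRel R w (σ (blockStart r + 1)) z) :
    ∃ s σ', r ≤ s ∧ IsSnakePrefix R x σ' (blockStart s + 1) ∧
      (∀ p ≤ blockStart r + 1, σ' p = σ p) ∧ σ' (blockStart s + 1) = z := by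
  obtain ⟨ws, hws, rfl⟩ := hw
  induction ws generalizing r σ with
  | nil => exact ⟨r, σ, le_rfl, h, fun _ _ => rfl, hz⟩
  | cons u ws ih =>
    rw [List.flatten_cons, wordRel_append] at hz
    obtain ⟨y, hu, hz⟩ := hz
    rw [h.eq_shiftedBlock hx hr (hws u List.mem_cons_self) hu] at hu
    obtain ⟨σ₁, h₁, agree₁, rfl⟩ := h.extend (occursAt_shiftedBlock r) hu
    rw [blockStart_add_length_shiftedBlock] at h₁ hz
    obtain ⟨s, σ', hs, h', agree', hend⟩ :=
      ih h₁ (by omega) (fun v hv => hws v (List.mem_cons_of_mem _ hv)) hz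
    refine ⟨s, σ', by omega, h', fun p hp => ?_, hend⟩
    have := blockStart_strictMono.monotone (Nat.le_add_right r 1)
    rw [agree' p (by omega), agree₁ p hp]

lemma extend_test (h : IsSnakePrefix R x σ (blockStart s + 1)) (hx : PhiSnake R x) (hs : 1 ≤ s)
    {P : X → Prop} {u v : List Letter} (huv : u ++ v ∈ piNS) {z : X}
    (hz : tokRel R P (u.map Tok.letter ++ Tok.test :: v.map Tok.letter) (σ (blockStart s + 1)) z) :
    ∃ σ', IsSnakePrefix R x σ' (blockStart (s + 1) + 1) ∧
      (∀ p ≤ blockStart s + 1, σ' p = σ p) ∧ u ++ v = shiftedBlock s ∧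
      P (σ' (blockStart s + 1 + u.length)) := by
  obtain ⟨y, hu, hP, hv⟩ := (tokRel_map_append_test ..).1 hz
  rw [tokRel_map_letter] at hv
  have hblock := h.eq_shiftedBlock hx hs huv ((wordRel_append ..).2 ⟨y, hu, hv⟩)
  have hocc := occursAt_shiftedBlock s
  rw [← hblock, occursAt_append] at hocc
  obtain ⟨σ₁, h₁, agree₁, rfl⟩ := h.extend hocc.1 hu
  obtain ⟨σ₂, h₂, agree₂, -⟩ := h₁.extend hocc.2 hv
  have hlen : blockStart s + 1 + u.length + v.length = blockStart (s + 1) + 1 := by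
    rw [add_assoc _ u.length, ← List.length_append, hblock, blockStart_add_length_shiftedBlock]
  refine ⟨σ₂, hlen ▸ h₂, fun p hp => ?_, hblock, by rwa [agree₂ _ le_rfl]⟩
  rw [agree₂ p (by omega), agree₁ p hp]

lemma extend_recur (h : IsSnakePrefix R x σ (blockStart r + 1)) (hx : PhiSnake R x)
    {T : Type} {ρ : X → Set T} {t0 : T} (hrec : PhiRecur R ρ t0 x) (hr : 1 ≤ r) :
    ∃ s σ', r < s ∧ IsSnakePrefix R x σ' (blockStart s + 1) ∧
      (∀ p ≤ blockStart r + 1, σ' p = σ p) ∧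
      ∃ m, 2 * r ≤ m ∧ cell 0 m ≤ blockStart s + 1 ∧ t0 ∈ ρ (σ' (cell 0 m)) := by
  obtain ⟨z, _, ⟨_, v, ⟨w, hw, rfl⟩, hv, rfl⟩, hpath⟩ := hrec _ (h.exists_wordRel_c le_rfl)
  obtain ⟨y, hy, hvpath⟩ := (tokRel_append ..).1 hpath
  obtain ⟨s, σ₁, hrs, h₁, agree₁, rfl⟩ :=
    h.extend_star hx hr hw ((tokRel_map_letter ..).1 hy)
  have hmono := blockStart_strictMono.monotone hrs
  rcases hv with ⟨p, ⟨i, j, rfl⟩, rfl⟩ | ⟨i, j, rfl⟩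
  · obtain ⟨σ₂, h₂, agree₂, -, ht0⟩ := h₁.extend_test hx (by omega) (u := [.a1, .b2])
      ⟨i + 1, j, by simp [wpow_succ]⟩ hvpath
    refine ⟨s + 1, σ₂, by omega, h₂, fun q hq => ?_, 2 * s, by omega, ?_, ?_⟩
    · rw [agree₂ q (by omega), agree₁ q hq]
    · rw [cell_of_add_eq_even (r := s) (by omega), blockStart_succ]; omega
    · rwa [cell_of_add_eq_even (r := s) (by omega)]
  · obtain ⟨σ₂, h₂, agree₂, hblock, ht0⟩ := h₁.extend_test hx (by omega)
      (u := wpow [.a1, .b2] i ++ [.d] ++ wpow [.a2, .b1] j) (v := [.c]) ⟨i, j, rfl⟩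
      (by simpa using hvpath)
    have hlen := congrArg List.length hblock
    simp [shiftedBlock] at hlen
    refine ⟨s + 1, σ₂, by omega, h₂, fun q hq => ?_, 2 * s + 1, by omega, ?_, ?_⟩
    · rw [agree₂ q (by omega), agree₁ q hq]
    · rw [cell_of_add_eq_odd (r := s) (by omega), blockStart_succ]; omega
    · convert ht0 using 3
      rw [cell_of_add_eq_odd (r := s) (by omega)]
      simp; omega

end IsSnakePrefix

lemma PhiSnake.exists_isSnakePrefix (hx : PhiSnake R x) :
    ∃ σ, IsSnakePrefix R x σ (blockStart 1 + 1) := by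
  obtain ⟨y, hy⟩ := hx.1
  obtain ⟨σ, hσ, -⟩ := IsSnakePrefix.extend (σ := fun _ => x) ⟨rfl, by simp⟩ occursAt_initial hy
  exact ⟨σ, hσ⟩

lemma PhiEWNS.neighbours {T : Type} {ρ : X → Set T} {H V : T → T → Prop}
    (hewns : PhiEWNS R ρ H V x) {σ : ℕ → X} (hσ : ∀ n, IsSnakePrefix R x σ n) (n m : ℕ) :
    ∀ t ∈ ρ (σ (cell n m)), (∃ t' ∈ ρ (σ (cell (n + 1) m)), H t t') ∧
      ∃ t' ∈ ρ (σ (cell n (m + 1))), V t t' := by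
  intro t ht
  rcases Nat.even_or_odd' (n + m) with ⟨r, hr | hr⟩
  · rw [cell_of_add_eq_even hr] at ht
    have hy : ∃ u i, wordRel R (u ++ [.c] ++ wpow [.a1, .b2] (i + 1)) x
        (σ (blockStart r + 2 * (n + 1) + 1)) :=
      ⟨snakeFactor 0 (blockStart r), n, (hσ 0).1 ▸ (hσ _).wordRel_of_occursAt
        (((occursAt_snakeFactor 0 _).append (occursAt_singleton.2 (snakeWord_blockStart r))
          (by simp)).append (occursAt_a1b2 (r := r) (k := 0) (by omega)) (by simp))
        (by simp; ring) le_rfl⟩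
    obtain ⟨hH, hV⟩ := hewns.1 _ hy t ht
    exact ⟨hH _ ⟨_, ⟨m, rfl⟩, (hσ _).wordRel_of_occursAt (occursAt_ascent (by omega) (by omega))
        (by rw [cell_of_add_eq_odd (r := r) (by omega)]; simp; omega) le_rfl⟩,
      hV _ ⟨_, ⟨m, rfl⟩, (hσ _).wordRel_of_occursAt (occursAt_ascent (by omega) (by omega))
        (by rw [cell_of_add_eq_odd (r := r) (by omega)]; simp; omega) le_rfl⟩⟩
  · rw [cell_of_add_eq_odd hr] at ht
    have hy : ∃ u i, wordRel R (u ++ [.d] ++ wpow [.a2, .b1] (i + 1)) x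
        (σ (blockStart r + 4 * r + 2 * (m + 1) + 4)) :=
      ⟨snakeFactor 0 (blockStart r + 4 * r + 3), m, (hσ 0).1 ▸ (hσ _).wordRel_of_occursAt
        (((occursAt_snakeFactor 0 _).append (occursAt_singleton.2 (snakeWord_d r))
          (by simp)).append (occursAt_a2b1 (r := r) (k := 0) (by omega)) (by simp))
        (by simp; ring) le_rfl⟩
    obtain ⟨hH, hV⟩ := hewns.2 _ hy t ht
    exact ⟨hH _ ⟨_, ⟨n, rfl⟩, (hσ _).wordRel_of_occursAt (occursAt_descent (by omega) (by omega))
        (by rw [cell_of_add_eq_even (r := r + 1) (by omega), blockStart_succ]; simp; omega) le_rfl⟩,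
      hV _ ⟨_, ⟨n, rfl⟩, (hσ _).wordRel_of_occursAt (occursAt_descent (by omega) (by omega))
        (by rw [cell_of_add_eq_even (r := r + 1) (by omega), blockStart_succ]; simp; omega) le_rfl⟩⟩

theorem exists_recurring_snake (hx : PhiSnake R x) {T : Type} {ρ : X → Set T} {t0 : T}
    (hrec : PhiRecur R ρ t0 x) :
    ∃ σ : ℕ → X, σ 0 = x ∧ IsSnake R σ ∧ ∀ N, ∃ m, N ≤ m ∧ t0 ∈ ρ (σ (cell 0 m)) := by
  -- `R` need not be functional, so the snake is built by dependent choice, each step following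
  -- a `β`-path through a `t₀`-world.
  let D := {d : ℕ × (ℕ → X) // 1 ≤ d.1 ∧ IsSnakePrefix R x d.2 (blockStart d.1 + 1)}
  have hstep : ∀ d : D, ∃ e : D, d.1.1 < e.1.1 ∧
      (∀ p ≤ blockStart d.1.1 + 1, e.1.2 p = d.1.2 p) ∧
      ∃ m, 2 * d.1.1 ≤ m ∧ cell 0 m ≤ blockStart e.1.1 + 1 ∧ t0 ∈ ρ (e.1.2 (cell 0 m)) := by
    rintro ⟨⟨r, σ⟩, hr, hσ⟩
    obtain ⟨s, σ', hrs, hσ', hagree, hm⟩ := hσ.extend_recur hx hrec hr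
    exact ⟨⟨(s, σ'), by omega, hσ'⟩, hrs, hagree, hm⟩
  choose next hnext using hstep
  obtain ⟨σ₀, hσ₀⟩ := hx.exists_isSnakePrefix
  let d : ℕ → D := fun k => next^[k] ⟨(1, σ₀), le_rfl, hσ₀⟩
  have hd : ∀ k, d (k + 1) = next (d k) := fun k => Function.iterate_succ_apply' ..
  have hr : StrictMono fun k => (d k).1.1 :=
    strictMono_nat_of_lt_succ fun k => hd k ▸ (hnext (d k)).1
  have hn : StrictMono fun k => blockStart (d k).1.1 + 1 :=
    fun a b hab => Nat.add_lt_add_right (blockStart_strictMono (hr hab)) 1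
  obtain ⟨σ, hσ⟩ := exists_eq_of_coherent hn (f := fun k => (d k).1.2)
    fun k p hp => by simp only [hd]; exact (hnext (d k)).2.1 p hp
  refine ⟨σ, ?_, fun p => ?_, fun N => ?_⟩
  · rw [hσ 0 0 (by omega)]; exact (d 0).2.2.1
  · have hp : p + 1 ≤ blockStart (d (p + 1)).1.1 + 1 := hn.id_le (p + 1)
    rw [hσ (p + 1) p (by omega), hσ (p + 1) (p + 1) hp]
    exact (d (p + 1)).2.2.2 p (by omega)
  · obtain ⟨m, hm, hmle, ht0⟩ := (hnext (d N)).2.2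
    have hN : N ≤ (d N).1.1 := hr.id_le N
    refine ⟨m, by omega, ?_⟩
    rw [hσ (N + 1) _ (by rw [hd]; exact hmle), hd]
    exact ht0

theorem exists_solution_of_recurring_snake {T : Type} {ρ : X → Set T} {H V : T → T → Prop}
    {t0 : T} {σ : ℕ → X} (hσ0 : σ 0 = x) (hσ : IsSnake R σ)
    (hrec : ∀ N, ∃ m, N ≤ m ∧ t0 ∈ ρ (σ (cell 0 m))) (htile : PhiTile R ρ x)
    (hewns : PhiEWNS R ρ H V x) :
    ∃ μ : ℕ → ℕ → T, {m : ℕ | μ 0 m = t0}.Infinite ∧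
      ∀ n m : ℕ, H (μ n m) (μ (n + 1) m) ∧ V (μ n m) (μ n (m + 1)) := by
  have hpre : ∀ n, IsSnakePrefix R x σ n := fun n => ⟨hσ0, fun p _ => hσ p⟩
  choose τ hτ using fun p => htile (σ p)
    ⟨_, hσ0 ▸ (hpre p).wordRel_of_occursAt (occursAt_snakeFactor 0 p) (by simp) le_rfl⟩
  refine ⟨fun n m => τ (cell n m), Set.infinite_of_forall_exists_gt fun N => ?_, fun n m => ?_⟩
  · obtain ⟨m, hm, ht0⟩ := hrec (N + 1)
    exact ⟨m, ((hτ _).2 t0 ht0).symm, by omega⟩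
  · obtain ⟨⟨t₁, ht₁, hH⟩, t₂, ht₂, hV⟩ := hewns.neighbours hpre n m _ (hτ _).1
    rw [(hτ _).2 t₁ ht₁] at hH
    rw [(hτ _).2 t₂ ht₂] at hV
    exact ⟨hH, hV⟩

end Backward

theorem tiling_iff_satisfiable_general (T : Type) (H V : T → T → Prop) (t0 : T) :
    (∃ μ : ℕ → ℕ → T, {m : ℕ | μ 0 m = t0}.Infinite ∧
      ∀ n m : ℕ, H (μ n m) (μ (n + 1) m) ∧ V (μ n m) (μ n (m + 1))) ↔
    (∃ (X : Type) (R : Letter → X → X → Prop) (ρ : X → Set T) (x : X),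
      PhiSnake R x ∧ PhiRecur R ρ t0 x ∧ PhiTile R ρ x ∧ PhiEWNS R ρ H V x) := by
  constructor
  · rintro ⟨μ, hrec, hμ⟩
    exact ⟨ℕ, snakeRel, fun p => {snakeTile μ t0 p}, 0, phiSnake_snakeRel,
      phiRecur_snakeRel hrec, phiTile_snakeRel μ t0, phiEWNS_snakeRel hμ⟩
  · rintro ⟨X, R, ρ, x, hsnake, hrec, htile, hewns⟩
    obtain ⟨σ, hσ0, hσ, hσrec⟩ := exists_recurring_snake hsnake hrec
    exact exists_solution_of_recurring_snake hσ0 hσ hσrec htile hewns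

/-- A recurring tiling system `𝒯 = (T, H, V, t₀)` has a solution if and only if there
are a Kripke structure over `Σ` with valuation into `2^T` and a world satisfying all of
`φ_snake`, `φ_recur`, `φ_tile`, and `φ↔↕`. -/
theorem tiling_iff_satisfiable (T : Type) [Fintype T] (H V : T → T → Prop) (t0 : T) :
    (∃ μ : ℕ → ℕ → T, {m : ℕ | μ 0 m = t0}.Infinite ∧
      ∀ n m : ℕ, H (μ n m) (μ (n + 1) m) ∧ V (μ n m) (μ n (m + 1))) ↔
    (∃ (X : Type) (R : Letter → X → X → Prop) (ρ : X → Set T) (x : X),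
      PhiSnake R x ∧ PhiRecur R ρ t0 x ∧ PhiTile R ρ x ∧ PhiEWNS R ρ H V x) :=
  tiling_iff_satisfiable_general T H V t0
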